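/- Let G = (V,E) be a simple graph and H = {H_v}_{v∈V} a family of nontrivial finite groups. Then: (i) the assignment (f_v)_{v∈V} ↦ M(id_G,{f_v}) is an injective group homomorphism Φ : ∏_{v∈V} Aut(H_v) → Aut_Part(M(G,H)); (ii) for every f ∈ Aut_Part(M(G,H)) there is a unique graph automorphism σ ∈ Aut_Graphs(G) with f(H̃_v ∖ {∅}) ⊆ H̃_{σ(v)} for all v ∈ V, and the resulting map Ψ : Aut_Part(M(G,H)) → Aut_Graphs(G) is a group homomorphism; (iii) the kernel of Ψ equals the image of Φ. In other words, there is an exact sequence 1 → ∏_{v∈V} Aut(H_v) → Aut_Part(M(G,H)) → Aut_Graphs(G). -/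

import Mathlib

set_option linter.unusedSectionVars false

open Monoid

namespace PaperPG

/-! ### Generic notions: letters, reduced / cyclically reduced words, reduced forms -/

section Letters

variable {ι : Type*} (H : ι → Type*) [∀ i, Group (H i)]

/-- A letter: a vertex/index together with an element of the corresponding group. -/
abbrev Ltr : Type _ := (i : ι) × H i

/-- A (combinatorially) reduced word: all letters are non-identity and adjacent letters
belong to distinct factors. -/
def IsRed (l : List (Ltr H)) : Prop :=
  (∀ x ∈ l, x.2 ≠ 1) ∧ l.Chain' fun a b => a.1 ≠ b.1

/-- A cyclically reduced word: reduced, and if it has length at least `2`, its first and last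
letters belong to distinct factors. -/
def IsCycRed (l : List (Ltr H)) : Prop :=
  IsRed H l ∧ ∀ a ∈ l.head?, ∀ b ∈ l.getLast?, 2 ≤ l.length → a.1 ≠ b.1

theorem isRed_nil : IsRed H ([] : List (Ltr H)) := by
  exact ⟨by simp, List.isChain_nil⟩

theorem isCycRed_nil : IsCycRed H ([] : List (Ltr H)) := by
  refine ⟨isRed_nil H, ?_⟩
  simp

theorem isCycRed_single (x : Ltr H) (hx : x.2 ≠ 1) : IsCycRed H [x] := by
  refine ⟨⟨by simpa using hx, List.isChain_singleton _⟩, ?_⟩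
  simp

variable [DecidableEq ι] [∀ i, DecidableEq (H i)]

/-- The element of the free product `∗_{i} H i` determined by a word. -/
noncomputable def listProd (l : List (Ltr H)) : CoprodI H :=
  (l.map fun x => CoprodI.of x.2).prod

/-- The reduced form of a word: the unique reduced word representing the product of its
letters in the free product `∗_i H i`. -/
noncomputable def red (l : List (Ltr H)) : List (Ltr H) :=
  (CoprodI.Word.equiv (listProd H l)).toList

/-- The set of indices (vertices) occurring in a word. -/
def verts (l : List (Ltr H)) : Set ι := {i | ∃ x ∈ l, x.1 = i}

/-- The formal inverse of a word: invert every letter and reverse. -/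
def rawInv (l : List (Ltr H)) : List (Ltr H) :=
  (l.map fun x => (⟨x.1, x.2⁻¹⟩ : Ltr H)).reverse

end Letters

/-! ### Homomorphisms of (the underlying data of) partial groups -/

/-- `f` is a homomorphism of partial groups, from the partial group with domain `D₁` and
product `P₁` to the one with domain `D₂` and product `P₂`. -/
def IsHom {M N : Type*} (D₁ : Set (List M)) (P₁ : List M → M)
    (D₂ : Set (List N)) (P₂ : List N → N) (f : M → N) : Prop :=
  (∀ u ∈ D₁, u.map f ∈ D₂) ∧ ∀ u ∈ D₁, P₂ (u.map f) = f (P₁ u)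

theorem isHom_id {M : Type*} (D : Set (List M)) (P : List M → M) : IsHom D P D P id := by
  constructor <;> intro u hu <;> simp [hu]

theorem IsHom.comp {M₁ M₂ M₃ : Type*} {D₁ : Set (List M₁)} {P₁ : List M₁ → M₁}
    {D₂ : Set (List M₂)} {P₂ : List M₂ → M₂} {D₃ : Set (List M₃)} {P₃ : List M₃ → M₃}
    {g : M₂ → M₃} {f : M₁ → M₂} (hg : IsHom D₂ P₂ D₃ P₃ g) (hf : IsHom D₁ P₁ D₂ P₂ f) :
    IsHom D₁ P₁ D₃ P₃ (g ∘ f) := by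
  refine ⟨fun u hu => ?_, fun u hu => ?_⟩
  · rw [← List.map_map]
    exact hg.1 _ (hf.1 u hu)
  · rw [← List.map_map, hg.2 _ (hf.1 u hu), hf.2 u hu]
    rfl

/-! ### The partial group `M(G, H)` associated to a decorated graph -/

section Graph

variable {ι : Type*} (H : ι → Type*) [∀ i, Group (H i)]
  [DecidableEq ι] [∀ i, DecidableEq (H i)] (G : SimpleGraph ι)

/-- Membership in `M(G,H)`: a cyclically reduced word whose set of vertices is a clique. -/
def Mem (l : List (Ltr H)) : Prop := IsCycRed H l ∧ G.IsClique (verts H l)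

theorem mem_nil : Mem H G [] := by
  refine ⟨isCycRed_nil H, ?_⟩
  simp [verts, SimpleGraph.isClique_iff, Set.Pairwise]

theorem mem_single (v : ι) (h : H v) (hne : h ≠ 1) : Mem H G [⟨v, h⟩] := by
  refine ⟨isCycRed_single H _ hne, ?_⟩
  simp only [verts, SimpleGraph.isClique_iff, Set.Pairwise, List.mem_singleton]
  rintro a ⟨x, hx, rfl⟩ b ⟨y, hy, rfl⟩ hne'
  subst hx; subst hy
  exact absurd rfl hne'

/-- A word with letters elements of `M(G,H)` is in the domain `D(G,H)` iff all its letters are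
elements of `M(G,H)`, all occurring vertices lie in a common clique, and the reduced form of
any subproduct `u_i ⋯ u_j` is cyclically reduced. -/
def InD (W : List (List (Ltr H))) : Prop :=
  (∀ u ∈ W, Mem H G u) ∧
  G.IsClique {i | ∃ u ∈ W, i ∈ verts H u} ∧
  ∀ i j : ℕ, i ≤ j → j < W.length →
    IsCycRed H (red H (((W.drop i).take (j + 1 - i)).flatten))

/-- The underlying set of the partial group `M(G,H)`. -/
def Carrier : Type _ := {l : List (Ltr H) // Mem H G l}

/-- The domain of the partial group `M(G,H)`. -/
def pgD : Set (List (Carrier H G)) := {W | InD H G (W.map Subtype.val)}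

/-- The unit of the partial group `M(G,H)`: the empty word. -/
def one : Carrier H G := ⟨[], mem_nil H G⟩

/-- The product map of the partial group `M(G,H)`: the reduced form of the concatenation
(junk value `1` outside of the domain). -/
noncomputable def pgPi (W : List (Carrier H G)) : Carrier H G := by
  classical exact if h : Mem H G (red H (W.map Subtype.val).flatten) then ⟨_, h⟩ else one H G

/-- The inversion of the partial group `M(G,H)` (junk value `1` if the result were not a
member, which never happens). -/
noncomputable def invCar (x : Carrier H G) : Carrier H G := by
  classical exact if h : Mem H G (rawInv H x.val) then ⟨_, h⟩ else one H G

/-- The subset `H̃ᵥ` of `M(G,H)`: the empty word together with the one-letter words with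
letter a nontrivial element of `H v`. -/
def Htilde (v : ι) : Set (Carrier H G) :=
  {x | x.val = [] ∨ ∃ h : H v, h ≠ 1 ∧ x.val = [⟨v, h⟩]}

end Graph

/-! ### Induced maps -/

section Induced

variable {ι ι' : Type*} (H : ι → Type*) [∀ i, Group (H i)]
  [DecidableEq ι] [∀ i, DecidableEq (H i)] (G : SimpleGraph ι)
  (H' : ι' → Type*) [∀ i, Group (H' i)]
  [DecidableEq ι'] [∀ i, DecidableEq (H' i)] (G' : SimpleGraph ι')

/-- The letterwise map on words induced by a map of vertices `fG` and group homomorphisms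
`fH v : H v →* H' (fG v)`. -/
def rawInduced (fG : ι → ι') (fH : ∀ i, H i →* H' (fG i)) (l : List (Ltr H)) :
    List (Ltr H') :=
  l.map fun x => ⟨fG x.1, fH x.1 x.2⟩

/-- The map `M(f_G, {f_v}) : M(G,H) → M(G',H')` (junk value `1` if the image word were not a
member; this never happens when the `fH v` are injective). -/
noncomputable def inducedCar (fG : ι → ι') (fH : ∀ i, H i →* H' (fG i))
    (x : Carrier H G) : Carrier H' G' := by
  classical exact if h : Mem H' G' (rawInduced H H' fG fH x.val) then ⟨_, h⟩ else one H' G'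

/-- A homomorphism of partial groups `M(G,H) → M(G',H')` has torsion-free kernel if the only
element of finite order (as an element of the ambient free product) sent to `1` is `1`. -/
def TFKer (f : Carrier H G → Carrier H' G') : Prop :=
  ∀ x : Carrier H G, f x = one H' G' → IsOfFinOrder (listProd H x.val) → x = one H G

end Induced

/-! ### Automorphism groups -/

section Aut

variable {ι : Type*} (H : ι → Type*) [∀ i, Group (H i)]
  [DecidableEq ι] [∀ i, DecidableEq (H i)] (G : SimpleGraph ι)

/-- The automorphism group of the partial group `M(G,H)`, as a subgroup of the permutation
group of its carrier: bijections that are homomorphisms in both directions. -/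
noncomputable def pgAut : Subgroup (Equiv.Perm (Carrier H G)) where
  carrier := {f | IsHom (pgD H G) (pgPi H G) (pgD H G) (pgPi H G) f ∧
    IsHom (pgD H G) (pgPi H G) (pgD H G) (pgPi H G) f.symm}
  one_mem' := ⟨isHom_id _ _, isHom_id _ _⟩
  mul_mem' := by
    rintro f g ⟨hf, hf'⟩ ⟨hg, hg'⟩
    exact ⟨hf.comp hg, hg'.comp hf'⟩
  inv_mem' := by
    rintro f ⟨hf, hf'⟩
    exact ⟨hf', hf⟩

/-- The automorphism group of a simple graph, as a subgroup of the permutation group of its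
vertices: bijections such that both the map and its inverse send edges to edges. -/
def graphAut : Subgroup (Equiv.Perm ι) where
  carrier := {σ | (∀ a b, G.Adj a b → G.Adj (σ a) (σ b)) ∧
    (∀ a b, G.Adj a b → G.Adj (σ.symm a) (σ.symm b))}
  one_mem' := ⟨fun a b h => h, fun a b h => h⟩
  mul_mem' := by
    rintro f g ⟨hf, hf'⟩ ⟨hg, hg'⟩
    exact ⟨fun a b h => hf _ _ (hg _ _ h), fun a b h => hg' _ _ (hf' _ _ h)⟩
  inv_mem' := by
    rintro f ⟨hf, hf'⟩
    exact ⟨hf', hf⟩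

/-- An automorphism `f` of `M(G,H)` covers the vertex map `σ` if for every vertex `v`,
`f` sends the nontrivial elements of `H̃ᵥ` into `H̃_{σ v}`. -/
def CoversVia (f : Carrier H G → Carrier H G) (σ : ι → ι) : Prop :=
  ∀ (v : ι) (h : H v) (hne : h ≠ 1),
    ∃ h' : H (σ v), h' ≠ 1 ∧ (f ⟨[⟨v, h⟩], mem_single H G v h hne⟩).val = [⟨σ v, h'⟩]

end Aut

/-! ### Subgroups and locally finite subgroups of partial groups -/

/-- A subset `N` is a subgroup of the partial group with data `(D, P, inv)`: it is closed
under inversion, every word with letters in `N` is in the domain `D`, and `P` maps such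
words into `N`. -/
def IsSubgroupOf {M : Type*} (D : Set (List M)) (P : List M → M) (inv : M → M)
    (N : Set M) : Prop :=
  (∀ x ∈ N, inv x ∈ N) ∧ ∀ W : List M, (∀ u ∈ W, u ∈ N) → W ∈ D ∧ P W ∈ N

/-- A subgroup `N` of a partial group is locally finite: every finite subset of `N` is
contained in a finite subgroup contained in `N` (i.e. every finitely generated subgroup of the
group `N` is finite). -/
def IsLocFinSubgroupOf {M : Type*} (D : Set (List M)) (P : List M → M) (inv : M → M)
    (N : Set M) : Prop :=
  IsSubgroupOf D P inv N ∧
    ∀ S : Set M, S ⊆ N → S.Finite →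
      ∃ K : Set M, S ⊆ K ∧ K ⊆ N ∧ IsSubgroupOf D P inv K ∧ K.Finite

end PaperPG

namespace PaperPG

section Lemmas

variable {ι : Type*} {H : ι → Type*} [∀ i, Group (H i)]
  [DecidableEq ι] [∀ i, DecidableEq (H i)] {G : SimpleGraph ι}

@[simp] theorem map_val_nil : (([] : List (Carrier H G)).map Subtype.val) = [] := rfl

@[simp] theorem map_val_cons (x : Carrier H G) (W : List (Carrier H G)) :
    (x :: W).map Subtype.val = x.val :: W.map Subtype.val := rfl

theorem map_val_map {α : Type*} (f : α → Carrier H G) (W : List α) :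
    (W.map f).map Subtype.val = W.map (fun a => (f a).val) := List.map_map

theorem map_map_val {β : Type*} (g : List (Ltr H) → β) (W : List (Carrier H G)) :
    (W.map Subtype.val).map g = W.map (fun a => g a.val) := List.map_map

theorem map_val_replicate (n : ℕ) (x : Carrier H G) :
    (List.replicate n x).map Subtype.val = List.replicate n x.val := List.map_replicate

/-! #### Basic facts about `red` -/

/-- Build a `Word` from a reduced list. -/
def wordOf (l : List (Ltr H)) (hl : IsRed H l) : CoprodI.Word H := ⟨l, hl.1, hl.2⟩

theorem equiv_word_prod (w : CoprodI.Word H) : CoprodI.Word.equiv w.prod = w := by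
  have h : CoprodI.Word.equiv.symm w = w.prod := rfl
  rw [← h, Equiv.apply_symm_apply]

theorem isRed_red (l : List (Ltr H)) : IsRed H (red H l) :=
  ⟨(CoprodI.Word.equiv (listProd H l)).ne_one, (CoprodI.Word.equiv (listProd H l)).chain_ne⟩

theorem red_eq_of_listProd_eq {l m : List (Ltr H)} (h : listProd H l = listProd H m) :
    red H l = red H m := by simp [red, h]

theorem red_of_isRed {l : List (Ltr H)} (hl : IsRed H l) : red H l = l := by
  have h : listProd H l = (wordOf l hl).prod := rfl
  rw [red, h, equiv_word_prod]; rfl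

theorem red_nil : red H ([] : List (Ltr H)) = [] := red_of_isRed (isRed_nil H)

theorem listProd_red (l : List (Ltr H)) : listProd H (red H l) = listProd H l := by
  have h : listProd H (red H l) = (CoprodI.Word.equiv (listProd H l)).prod := rfl
  rw [h]
  have h2 : (CoprodI.Word.equiv (listProd H l)).prod
      = CoprodI.Word.equiv.symm (CoprodI.Word.equiv (listProd H l)) := rfl
  rw [h2, Equiv.symm_apply_apply]

theorem listProd_nil : listProd H ([] : List (Ltr H)) = 1 := rfl

theorem listProd_cons (x : Ltr H) (l : List (Ltr H)) :
    listProd H (x :: l) = CoprodI.of x.2 * listProd H l := by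
  simp [listProd]

theorem listProd_append (l m : List (Ltr H)) :
    listProd H (l ++ m) = listProd H l * listProd H m := by
  simp [listProd]

theorem listProd_single (x : Ltr H) : listProd H [x] = CoprodI.of x.2 := by
  simp [listProd]

theorem red_single {v : ι} {g : H v} (hg : g ≠ 1) :
    red H [(⟨v, g⟩ : Ltr H)] = [⟨v, g⟩] :=
  red_of_isRed ⟨by simpa using hg, List.isChain_singleton _⟩

theorem red_eq_single_of_listProd {l : List (Ltr H)} {v : ι} {g : H v}
    (hg : g ≠ 1) (h : listProd H l = CoprodI.of g) : red H l = [⟨v, g⟩] := by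
  rw [red_eq_of_listProd_eq (m := [⟨v, g⟩]) (by rw [h, listProd_single]), red_single hg]

theorem red_eq_nil_of_listProd {l : List (Ltr H)} (h : listProd H l = 1) :
    red H l = [] := by
  rw [red_eq_of_listProd_eq (m := []) (by rw [h, listProd_nil]), red_nil]

theorem isRed_of_append {l m : List (Ltr H)} (h : IsRed H (l ++ m)) :
    IsRed H l ∧ IsRed H m := by
  obtain ⟨h1, h2⟩ := h
  change List.IsChain _ _ at h2
  rw [List.isChain_append] at h2
  exact ⟨⟨fun x hx => h1 x (by simp [hx]), h2.1⟩, ⟨fun x hx => h1 x (by simp [hx]), h2.2.1⟩⟩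

theorem IsCycRed.isRed {l : List (Ltr H)} (h : IsCycRed H l) : IsRed H l := h.1

/-! #### The letterwise action -/

/-- The letterwise action of a family of automorphisms on words. -/
def mapL (fs : ∀ i, MulAut (H i)) (l : List (Ltr H)) : List (Ltr H) :=
  l.map fun p => ⟨p.1, fs p.1 p.2⟩

theorem mapL_mapL (fs gs : ∀ i, MulAut (H i)) (l : List (Ltr H)) :
    mapL fs (mapL gs l) = mapL (fs * gs) l := by
  simp only [mapL, List.map_map]
  rfl

theorem mapL_one (l : List (Ltr H)) : mapL 1 l = l := by
  have h : (fun p : Ltr H => (⟨p.1, (1 : ∀ i, MulAut (H i)) p.1 p.2⟩ : Ltr H)) = id :=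
    funext fun p => Sigma.eta p
  rw [mapL, h, List.map_id]

theorem mapL_append (fs : ∀ i, MulAut (H i)) (l m : List (Ltr H)) :
    mapL fs (l ++ m) = mapL fs l ++ mapL fs m := by
  simp [mapL]

theorem verts_mapL (fs : ∀ i, MulAut (H i)) (l : List (Ltr H)) :
    verts H (mapL fs l) = verts H l := by
  ext i
  simp only [verts, mapL, Set.mem_setOf_eq]
  constructor
  · rintro ⟨x, hx, rfl⟩
    rw [List.mem_map] at hx
    obtain ⟨p, hp, rfl⟩ := hx
    exact ⟨p, hp, rfl⟩
  · rintro ⟨p, hp, rfl⟩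
    exact ⟨⟨p.1, fs p.1 p.2⟩, List.mem_map_of_mem hp, rfl⟩

theorem isRed_mapL (fs : ∀ i, MulAut (H i)) {l : List (Ltr H)} (h : IsRed H l) :
    IsRed H (mapL fs l) := by
  constructor
  · intro x hx
    simp only [mapL, List.mem_map] at hx
    obtain ⟨p, hp, rfl⟩ := hx
    simpa using h.1 p hp
  · have h2 := h.2
    rw [mapL]
    change List.IsChain _ _
    rw [List.isChain_map]
    exact h2

theorem isCycRed_mapL (fs : ∀ i, MulAut (H i)) {l : List (Ltr H)} (h : IsCycRed H l) :
    IsCycRed H (mapL fs l) := by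
  refine ⟨isRed_mapL fs h.1, ?_⟩
  intro a ha b hb hlen
  rw [mapL, List.head?_map, Option.mem_def, Option.map_eq_some_iff] at ha
  rw [mapL, List.getLast?_map, Option.mem_def, Option.map_eq_some_iff] at hb
  obtain ⟨a₀, ha₀, rfl⟩ := ha
  obtain ⟨b₀, hb₀, rfl⟩ := hb
  rw [mapL, List.length_map] at hlen
  exact h.2 a₀ ha₀ b₀ hb₀ hlen

/-- The automorphism of the free product induced by a family of automorphisms. -/
def indAut (fs : ∀ i, MulAut (H i)) : CoprodI H →* CoprodI H :=
  CoprodI.lift fun i => CoprodI.of.comp (fs i).toMonoidHom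

theorem listProd_mapL (fs : ∀ i, MulAut (H i)) (l : List (Ltr H)) :
    listProd H (mapL fs l) = indAut fs (listProd H l) := by
  induction l with
  | nil => simp [mapL, listProd_nil]
  | cons x l ih =>
      rw [show mapL fs (x :: l) = (⟨x.1, fs x.1 x.2⟩ : Ltr H) :: mapL fs l from rfl,
        listProd_cons, listProd_cons, map_mul, ih]
      rw [show indAut fs (CoprodI.of x.2) = CoprodI.of (fs x.1 x.2) from by simp [indAut]]

theorem red_mapL (fs : ∀ i, MulAut (H i)) (l : List (Ltr H)) :
    red H (mapL fs l) = mapL fs (red H l) := by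
  calc red H (mapL fs l) = red H (mapL fs (red H l)) :=
        red_eq_of_listProd_eq (by rw [listProd_mapL, listProd_mapL, listProd_red])
    _ = mapL fs (red H l) := red_of_isRed (isRed_mapL fs (isRed_red l))

theorem mem_mapL (fs : ∀ i, MulAut (H i)) {l : List (Ltr H)} (h : Mem H G l) :
    Mem H G (mapL fs l) :=
  ⟨isCycRed_mapL fs h.1, by rw [verts_mapL]; exact h.2⟩

theorem mem_mapL_iff (fs : ∀ i, MulAut (H i)) {l : List (Ltr H)} :
    Mem H G (mapL fs l) ↔ Mem H G l := by
  refine ⟨fun h => ?_, mem_mapL fs⟩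
  have h2 := mem_mapL (G := G) fs⁻¹ h
  rwa [mapL_mapL, inv_mul_cancel, mapL_one] at h2

/-- The letterwise action on the carrier of `M(G,H)`. -/
def carMap (fs : ∀ i, MulAut (H i)) (x : Carrier H G) : Carrier H G :=
  ⟨mapL fs x.val, mem_mapL fs x.2⟩

theorem carMap_carMap (fs gs : ∀ i, MulAut (H i)) (x : Carrier H G) :
    carMap fs (carMap gs x) = carMap (fs * gs) x :=
  Subtype.ext (mapL_mapL fs gs x.val)

theorem carMap_one (x : Carrier H G) : carMap 1 x = x := Subtype.ext (mapL_one x.val)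

/-- The letterwise action as a permutation of the carrier. -/
def permMap (fs : ∀ i, MulAut (H i)) : Equiv.Perm (Carrier H G) where
  toFun := carMap fs
  invFun := carMap fs⁻¹
  left_inv x := by rw [carMap_carMap, inv_mul_cancel, carMap_one]
  right_inv x := by rw [carMap_carMap, mul_inv_cancel, carMap_one]

theorem pgPi_eq {W : List (Carrier H G)} {l : List (Ltr H)}
    (hl : red H ((W.map Subtype.val).flatten) = l) (h : Mem H G l) :
    pgPi H G W = ⟨l, h⟩ := by
  subst hl
  unfold pgPi
  exact dif_pos h

theorem pgPi_neg {W : List (Carrier H G)}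
    (h : ¬ Mem H G (red H ((W.map Subtype.val).flatten))) :
    pgPi H G W = one H G := by
  unfold pgPi
  exact dif_neg h

theorem map_carMap_flatten (fs : ∀ i, MulAut (H i)) (W : List (Carrier H G)) :
    ((W.map (carMap fs)).map Subtype.val).flatten
      = mapL fs ((W.map Subtype.val)).flatten := by
  simp only [map_val_map, map_map_val, mapL, List.map_flatten]
  rfl

theorem inD_map (fs : ∀ i, MulAut (H i)) {W : List (Carrier H G)} (hW : W ∈ pgD H G) :
    W.map (carMap fs) ∈ pgD H G := by
  have hmaps : (W.map (carMap fs)).map Subtype.val = (W.map Subtype.val).map (mapL fs) := by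
    simp only [map_val_map, map_map_val]; rfl
  obtain ⟨h1, h2, h3⟩ := hW
  refine ⟨?_, ?_, ?_⟩
  · intro u hu
    rw [hmaps, List.mem_map] at hu
    obtain ⟨u₀, hu₀, rfl⟩ := hu
    exact mem_mapL fs (h1 u₀ hu₀)
  · rw [hmaps]
    have hset : {i | ∃ u ∈ (W.map Subtype.val).map (mapL fs), i ∈ verts H u}
        = {i | ∃ u ∈ W.map Subtype.val, i ∈ verts H u} := by
      ext i
      simp only [Set.mem_setOf_eq, List.mem_map]
      constructor
      · rintro ⟨u, ⟨u₀, hu₀, rfl⟩, hiu⟩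
        exact ⟨u₀, hu₀, by rwa [verts_mapL] at hiu⟩
      · rintro ⟨u₀, hu₀, hiu⟩
        exact ⟨mapL fs u₀, ⟨u₀, hu₀, rfl⟩, by rwa [verts_mapL]⟩
    rw [hset]
    exact h2
  · intro i j hij hj
    rw [hmaps] at hj ⊢
    rw [List.length_map] at hj
    have hflat : ((((W.map Subtype.val).map (mapL fs)).drop i).take (j + 1 - i)).flatten
        = mapL fs ((((W.map Subtype.val).drop i).take (j + 1 - i)).flatten) := by
      rw [← List.map_drop, ← List.map_take, mapL, List.map_flatten]
      rfl
    rw [hflat, red_mapL]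
    exact isCycRed_mapL fs (h3 i j hij hj)

theorem pgPi_map (fs : ∀ i, MulAut (H i)) (W : List (Carrier H G)) :
    pgPi H G (W.map (carMap fs)) = carMap fs (pgPi H G W) := by
  by_cases h : Mem H G (red H ((W.map Subtype.val).flatten))
  · rw [pgPi_eq (W := W.map (carMap fs)) (by rw [map_carMap_flatten, red_mapL])
      (mem_mapL fs h), pgPi_eq rfl h]
    rfl
  · rw [pgPi_neg (W := W.map (carMap fs))
      (by rw [map_carMap_flatten, red_mapL]; exact fun hc => h ((mem_mapL_iff fs).1 hc)),
      pgPi_neg h]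
    exact Subtype.ext rfl

theorem isHom_carMap (fs : ∀ i, MulAut (H i)) :
    IsHom (pgD H G) (pgPi H G) (pgD H G) (pgPi H G) (carMap fs) :=
  ⟨fun u hu => inD_map fs hu, fun u _ => pgPi_map fs u⟩

theorem permMap_mem_pgAut (fs : ∀ i, MulAut (H i)) :
    (permMap fs : Equiv.Perm (Carrier H G)) ∈ pgAut H G :=
  ⟨isHom_carMap fs, isHom_carMap fs⁻¹⟩

end Lemmas

section Lemmas2

variable {ι : Type*} {H : ι → Type*} [∀ i, Group (H i)]
  [DecidableEq ι] [∀ i, DecidableEq (H i)] {G : SimpleGraph ι}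

theorem isClique_of_subsingleton {S : Set ι} (v : ι) (h : ∀ a ∈ S, a = v) :
    G.IsClique S := fun a ha b hb hne => absurd ((h a ha).trans (h b hb).symm) hne

theorem inD_nil : ([] : List (Carrier H G)) ∈ pgD H G := by
  refine ⟨by simp, ?_, ?_⟩
  · intro a ha
    simp at ha
  · intro i j hij hj
    simp at hj

theorem pgPi_nil : pgPi H G ([] : List (Carrier H G)) = one H G :=
  pgPi_eq (by simp [red_nil]) (mem_nil H G)

theorem aut_one (f : ↥(pgAut H G)) :
    (f : Equiv.Perm (Carrier H G)) (one H G) = one H G := by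
  have h := f.2.1.2 [] inD_nil
  simp only [List.map_nil] at h
  rw [pgPi_nil] at h
  exact h.symm

theorem aut_eq_one_iff (f : ↥(pgAut H G)) (x : Carrier H G) :
    (f : Equiv.Perm (Carrier H G)) x = one H G ↔ x = one H G := by
  constructor
  · intro h
    have := (f : Equiv.Perm (Carrier H G)).injective (h.trans (aut_one f).symm)
    exact this
  · rintro rfl
    exact aut_one f

/-! #### Powers and torsion -/

/-- The `n`-fold concatenation of a word. -/
def powL (n : ℕ) (l : List (Ltr H)) : List (Ltr H) := (List.replicate n l).flatten

theorem powL_zero (l : List (Ltr H)) : powL 0 l = [] := rfl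

theorem powL_succ (n : ℕ) (l : List (Ltr H)) : powL (n + 1) l = l ++ powL n l := by
  simp [powL, List.replicate_succ]

theorem powL_one (l : List (Ltr H)) : powL 1 l = l := by
  rw [powL_succ, powL_zero, List.append_nil]

theorem listProd_powL (n : ℕ) (l : List (Ltr H)) :
    listProd H (powL n l) = (listProd H l) ^ n := by
  induction n with
  | zero => rw [powL_zero, listProd_nil, pow_zero]
  | succ n ih => rw [powL_succ, listProd_append, ih, pow_succ']

theorem listProd_powL_single (v : ι) (h : H v) (n : ℕ) :
    listProd H (powL n [⟨v, h⟩]) = CoprodI.of (h ^ n) := by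
  rw [listProd_powL, listProd_single, map_pow]

theorem isCycRed_red_powL_single (v : ι) (h : H v) (n : ℕ) :
    IsCycRed H (red H (powL n [(⟨v, h⟩ : Ltr H)])) := by
  by_cases hn : h ^ n = 1
  · rw [red_eq_nil_of_listProd (by rw [listProd_powL_single, hn, map_one])]
    exact isCycRed_nil H
  · rw [red_eq_single_of_listProd hn (listProd_powL_single v h n)]
    exact isCycRed_single H _ hn

/-- For `n ≥ 1` and `l` nonempty cyclically reduced, `powL n l` is reduced with the same
first and last letters as `l`. -/
theorem isRed_powL {l : List (Ltr H)} (hl : IsCycRed H l) (h2 : 2 ≤ l.length) :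
    ∀ n, 0 < n → IsRed H (powL n l) ∧ (powL n l).head? = l.head?
      ∧ (powL n l).getLast? = l.getLast? := by
  have hne : l ≠ [] := by
    intro hc
    rw [hc] at h2
    simp at h2
  intro n hn
  induction n with
  | zero => omega
  | succ n ih =>
      rcases Nat.eq_zero_or_pos n with rfl | hpos
      · rw [powL_one]
        exact ⟨hl.1, rfl, rfl⟩
      · obtain ⟨ih1, ih2, ih3⟩ := ih hpos
        have hpow_ne : powL n l ≠ [] := by
          intro hc
          rw [hc] at ih2
          simp only [List.head?_nil] at ih2
          exact hne (List.head?_eq_none_iff.1 ih2.symm)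
        refine ⟨⟨?_, ?_⟩, ?_, ?_⟩
        · intro x hx
          rw [powL_succ, List.mem_append] at hx
          rcases hx with hx | hx
          · exact hl.1.1 x hx
          · exact ih1.1 x hx
        · rw [powL_succ]
          change List.IsChain _ _
          rw [List.isChain_append]
          refine ⟨hl.1.2, ih1.2, ?_⟩
          intro x hx y hy
          rw [ih2] at hy
          exact fun hc => hl.2 y hy x hx h2 hc.symm
        · rw [powL_succ, List.head?_append_of_ne_nil _ hne]
        · rw [powL_succ, List.getLast?_append_of_ne_nil _ hpow_ne, ih3]

/-- A one-letter element of the carrier. -/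
def sing (G : SimpleGraph ι) (v : ι) (h : H v) (hne : h ≠ 1) : Carrier H G :=
  ⟨[⟨v, h⟩], mem_single H G v h hne⟩

theorem sing_val (G : SimpleGraph ι) (v : ι) (h : H v) (hne : h ≠ 1) :
    (sing G v h hne).val = [⟨v, h⟩] := rfl

theorem verts_single (v : ι) (h : H v) {a : ι} (ha : a ∈ verts H [(⟨v, h⟩ : Ltr H)]) :
    a = v := by
  obtain ⟨x, hx, rfl⟩ := ha
  rw [List.mem_singleton] at hx
  rw [hx]

theorem inD_replicate_sing (v : ι) (h : H v) (hne : h ≠ 1) (n : ℕ) :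
    List.replicate n (sing G v h hne) ∈ pgD H G := by
  have hmap : (List.replicate n (sing G v h hne)).map Subtype.val
      = List.replicate n [(⟨v, h⟩ : Ltr H)] := List.map_replicate
  refine ⟨?_, ?_, ?_⟩ <;> rw [hmap]
  · intro u hu
    rw [List.mem_replicate] at hu
    rw [hu.2]
    exact mem_single H G v h hne
  · refine isClique_of_subsingleton v ?_
    rintro a ⟨u, hu, hau⟩
    rw [List.mem_replicate] at hu
    rw [hu.2] at hau
    exact verts_single v h hau
  · intro i j hij hj
    rw [List.drop_replicate, List.take_replicate]
    exact isCycRed_red_powL_single v h _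

theorem pgPi_replicate_sing (v : ι) (h : H v) (hne : h ≠ 1) {n : ℕ} (hn : h ^ n = 1) :
    pgPi H G (List.replicate n (sing G v h hne)) = one H G := by
  refine pgPi_eq ?_ (mem_nil H G)
  have hflat : ((List.replicate n (sing G v h hne)).map Subtype.val).flatten
      = powL n [(⟨v, h⟩ : Ltr H)] := by rw [map_val_replicate]; rfl
  rw [hflat]
  exact red_eq_nil_of_listProd (by rw [listProd_powL_single, hn, map_one])

/-- An element of `M(G,H)` is torsion if some positive power of it (as a word in the domain)
multiplies to the unit. -/
def Tors (x : Carrier H G) : Prop :=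
  ∃ n, 0 < n ∧ List.replicate n x ∈ pgD H G ∧ pgPi H G (List.replicate n x) = one H G

theorem tors_sing (v : ι) [Finite (H v)] (h : H v) (hne : h ≠ 1) :
    Tors (sing G v h hne) :=
  ⟨orderOf h, (isOfFinOrder_of_finite h).orderOf_pos, inD_replicate_sing v h hne _,
    pgPi_replicate_sing v h hne (pow_orderOf_eq_one h)⟩

theorem tors_map (f : ↥(pgAut H G)) {x : Carrier H G} (h : Tors x) :
    Tors ((f : Equiv.Perm (Carrier H G)) x) := by
  obtain ⟨n, hn, hD, hPi⟩ := h
  refine ⟨n, hn, ?_, ?_⟩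
  · have h1 := f.2.1.1 _ hD
    rwa [List.map_replicate] at h1
  · have h2 := f.2.1.2 _ hD
    rw [List.map_replicate] at h2
    rw [h2, hPi, aut_one]

theorem verts_powL_subset {l : List (Ltr H)} {n : ℕ} {a : ι}
    (ha : a ∈ verts H (powL n l)) : a ∈ verts H l := by
  obtain ⟨x, hx, rfl⟩ := ha
  rw [powL, List.mem_flatten] at hx
  obtain ⟨u, hu, hxu⟩ := hx
  rw [List.mem_replicate] at hu
  rw [hu.2] at hxu
  exact ⟨x, hxu, rfl⟩

/-- A torsion element has length at most one. -/
theorem length_le_one_of_tors {x : Carrier H G} (hx : Tors x) : x.val.length ≤ 1 := by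
  by_contra hlen
  have h2 : 2 ≤ x.val.length := by omega
  obtain ⟨n, hn, hD, hPi⟩ := hx
  obtain ⟨hred, hhead, hlast⟩ := isRed_powL x.2.1 h2 n hn
  have hmap : (List.replicate n x).map Subtype.val = List.replicate n x.val :=
    List.map_replicate
  have hflat : ((List.replicate n x).map Subtype.val).flatten = powL n x.val := by
    rw [hmap]; rfl
  have hredeq : red H (((List.replicate n x).map Subtype.val).flatten) = powL n x.val := by
    rw [hflat]
    exact red_of_isRed hred
  have hcyc : IsCycRed H (powL n x.val) := by
    refine ⟨hred, ?_⟩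
    intro a ha b hb _
    rw [hhead] at ha
    rw [hlast] at hb
    exact x.2.1.2 a ha b hb h2
  have hmem : Mem H G (powL n x.val) := by
    refine ⟨hcyc, ?_⟩
    intro a ha b hb hab
    exact x.2.2 (verts_powL_subset ha) (verts_powL_subset hb) hab
  rw [pgPi_eq hredeq hmem] at hPi
  have : powL n x.val = [] := congrArg Subtype.val hPi
  have hlen0 : (powL n x.val).length = 0 := by rw [this]; rfl
  have : (powL n x.val).head? = none := by rw [this]; rfl
  rw [hhead] at this
  rw [List.head?_eq_none_iff] at this
  rw [this] at h2
  simp at h2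

/-- An automorphism of `M(G,H)` sends one-letter elements to one-letter elements. -/
theorem sing_map [∀ i, Finite (H i)] (f : ↥(pgAut H G)) (v : ι) (h : H v) (hne : h ≠ 1) :
    ∃ (w : ι) (g : H w) (hg : g ≠ 1),
      (f : Equiv.Perm (Carrier H G)) (sing G v h hne) = sing G w g hg := by
  set y := (f : Equiv.Perm (Carrier H G)) (sing G v h hne) with hy
  have hto : Tors y := tors_map f (tors_sing v h hne)
  have hlen : y.val.length ≤ 1 := length_le_one_of_tors hto
  have hne0 : y ≠ one H G := by
    intro hc
    have h1 : sing G v h hne = one H G := (aut_eq_one_iff f _).1 (by rw [← hy]; exact hc)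
    have h2 := congrArg Subtype.val h1
    simp [sing, one] at h2
  have hne0' : y.val ≠ [] := fun hc => hne0 (Subtype.ext hc)
  obtain ⟨a, hv⟩ : ∃ a, y.val = [a] := by
    match h' : y.val with
    | [] => exact absurd h' hne0'
    | [a] => exact ⟨a, rfl⟩
    | a :: b :: t =>
        rw [h'] at hlen
        simp at hlen
  have hg : a.2 ≠ 1 := y.2.1.1.1 a (by rw [hv]; exact List.mem_singleton_self a)
  exact ⟨a.1, a.2, hg, Subtype.ext (by rw [hv]; exact (congrArg (fun z => [z]) (Sigma.eta a)).symm)⟩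

/-! #### Words of length two in the domain -/

theorem flatten_pair (x y : Carrier H G) :
    (([x, y].map Subtype.val)).flatten = x.val ++ y.val := by simp

theorem listProd_pair (x y : Ltr H) :
    listProd H [x, y] = CoprodI.of x.2 * CoprodI.of y.2 := by simp [listProd]

theorem inD_pair (x y : Carrier H G) (hc : G.IsClique (verts H (x.val ++ y.val)))
    (hcyc : IsCycRed H (red H (x.val ++ y.val))) : [x, y] ∈ pgD H G := by
  refine ⟨?_, ?_, ?_⟩
  · intro u hu
    simp only [map_val_cons, map_val_nil, List.mem_cons, List.not_mem_nil, or_false] at hu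
    rcases hu with rfl | rfl
    · exact x.2
    · exact y.2
  · have hset : {i | ∃ u ∈ [x, y].map Subtype.val, i ∈ verts H u} = verts H (x.val ++ y.val) := by
      ext a
      simp only [Set.mem_setOf_eq, map_val_cons, map_val_nil, List.mem_cons,
        List.not_mem_nil, or_false]
      constructor
      · rintro ⟨u, hu, b, hb, rfl⟩
        rcases hu with rfl | rfl
        · exact ⟨b, List.mem_append_left _ hb, rfl⟩
        · exact ⟨b, List.mem_append_right _ hb, rfl⟩
      · rintro ⟨b, hb, rfl⟩
        rw [List.mem_append] at hb
        rcases hb with hb | hb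
        · exact ⟨x.val, Or.inl rfl, b, hb, rfl⟩
        · exact ⟨y.val, Or.inr rfl, b, hb, rfl⟩
    rw [hset]
    exact hc
  · intro i j hij hj
    simp only [map_val_cons, map_val_nil, List.length_cons, List.length_nil] at hj
    interval_cases j <;> interval_cases i
    · -- i = 0, j = 0 : the word x
      simp only [map_val_cons, map_val_nil, List.drop_zero, List.take_succ_cons,
        List.take_zero, List.flatten_cons, List.flatten_nil, List.append_nil]
      refine (congrArg (IsCycRed H) (red_of_isRed x.2.1.1)).mpr ?_
      exact x.2.1
    · -- i = 0, j = 1 : the word x ++ y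
      have : (((([x, y].map Subtype.val).drop 0).take (1 + 1 - 0)).flatten) = x.val ++ y.val := by
        simp
      rw [this]
      exact hcyc
    · -- i = 1, j = 1 : the word y
      have : (((([x, y].map Subtype.val).drop 1).take (1 + 1 - 1)).flatten) = y.val := by
        simp
      rw [this]
      rw [red_of_isRed y.2.1.1]
      exact y.2.1

/-! #### The vertex map induced by an automorphism -/

variable [∀ i, Nontrivial (H i)] [∀ i, Finite (H i)]

/-- A fixed nontrivial element of `H v`. -/
noncomputable def eps (H : ι → Type*) [∀ i, Group (H i)] [∀ i, Nontrivial (H i)] (v : ι) :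
    H v := Classical.choose (exists_ne (1 : H v))

theorem eps_ne (v : ι) : eps H v ≠ 1 := Classical.choose_spec (exists_ne (1 : H v))

theorem sing_inj_vertex {w w' : ι} {g : H w} {g' : H w'} {hg : g ≠ 1} {hg' : g' ≠ 1}
    (h : sing G w g hg = sing G w' g' hg') : w = w' := by
  have h2 := congrArg (fun z : Carrier H G => (z.val.head?).map Sigma.fst) h
  simpa [sing] using h2

theorem length_map_le_one (f : ↥(pgAut H G)) (x : Carrier H G) (hx : x.val.length ≤ 1) :
    (((f : Equiv.Perm (Carrier H G)) x).val).length ≤ 1 := by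
  rcases hv : x.val with _ | ⟨a, rest⟩
  · have hx1 : x = one H G := Subtype.ext hv
    rw [hx1, aut_one]
    exact Nat.zero_le 1
  · rcases rest with _ | ⟨b, t⟩
    · have hg : a.2 ≠ 1 := x.2.1.1.1 a (by rw [hv]; exact List.mem_singleton_self a)
      have hx1 : x = sing G a.1 a.2 hg :=
        Subtype.ext (by rw [hv]; exact (congrArg (fun z => [z]) (Sigma.eta a)).symm)
      obtain ⟨w, g, hgne, hw⟩ := sing_map f a.1 a.2 hg
      rw [hx1, hw]
      exact le_refl 1
    · rw [hv] at hx
      simp at hx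

theorem two_le_length_map (f : ↥(pgAut H G)) (x : Carrier H G) (hx : 2 ≤ x.val.length) :
    2 ≤ (((f : Equiv.Perm (Carrier H G)) x).val).length := by
  by_contra hc
  have h1 : (((f : Equiv.Perm (Carrier H G)) x).val).length ≤ 1 := by omega
  have h2 := length_map_le_one f⁻¹ _ h1
  have h3 : ((f⁻¹ : ↥(pgAut H G)) : Equiv.Perm (Carrier H G))
      ((f : Equiv.Perm (Carrier H G)) x) = x := by
    simp
  rw [h3] at h2
  omega

theorem pgPi_pair_same_len (v : ι) (h k : H v) (hne : h ≠ 1) (kne : k ≠ 1) :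
    ((pgPi H G [sing G v h hne, sing G v k kne]).val).length ≤ 1 := by
  have hflat : (([sing G v h hne, sing G v k kne].map Subtype.val)).flatten
      = [(⟨v, h⟩ : Ltr H)] ++ [⟨v, k⟩] := flatten_pair _ _
  have hprod : listProd H ([(⟨v, h⟩ : Ltr H)] ++ [⟨v, k⟩]) = CoprodI.of (h * k) := by
    rw [listProd_append, listProd_single, listProd_single, map_mul]
  by_cases hk : h * k = 1
  · rw [pgPi_eq (l := []) (by rw [hflat]; exact red_eq_nil_of_listProd (by rw [hprod, hk, map_one]))
      (mem_nil H G)]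
    exact Nat.zero_le 1
  · rw [pgPi_eq (l := [⟨v, h * k⟩]) (by rw [hflat]; exact red_eq_single_of_listProd hk hprod)
      (mem_single H G v (h * k) hk)]
    exact le_refl 1

theorem inD_pair_same (v : ι) (h k : H v) (hne : h ≠ 1) (kne : k ≠ 1) :
    [sing G v h hne, sing G v k kne] ∈ pgD H G := by
  refine inD_pair _ _ ?_ ?_
  · refine isClique_of_subsingleton v ?_
    rintro a ⟨b, hb, rfl⟩
    simp only [sing, List.cons_append, List.nil_append, List.mem_cons,
      List.mem_singleton, List.not_mem_nil, or_false] at hb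
    rcases hb with rfl | rfl <;> rfl
  · have hprod : listProd H ((sing G v h hne).val ++ (sing G v k kne).val)
        = CoprodI.of (h * k) := by
      rw [listProd_append]
      rw [show (sing G v h hne).val = [(⟨v, h⟩ : Ltr H)] from rfl,
        show (sing G v k kne).val = [(⟨v, k⟩ : Ltr H)] from rfl,
        listProd_single, listProd_single, map_mul]
    by_cases hk : h * k = 1
    · rw [red_eq_nil_of_listProd (by rw [hprod, hk, map_one])]
      exact isCycRed_nil H
    · rw [red_eq_single_of_listProd hk hprod]
      exact isCycRed_single H _ hk


theorem isCycRed_pair {a b : Ltr H} (ha : a.2 ≠ 1) (hb : b.2 ≠ 1) (hab : a.1 ≠ b.1) :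
    IsCycRed H [a, b] := by
  refine ⟨⟨?_, ?_⟩, ?_⟩
  · intro x hx
    rcases List.mem_cons.1 hx with rfl | hx
    · exact ha
    · rw [List.mem_singleton] at hx
      rw [hx]
      exact hb
  · exact List.isChain_pair.2 hab
  · intro x hx y hy _
    simp only [List.head?_cons, Option.mem_def, Option.some.injEq] at hx
    have hy2 : b = y := by simpa [List.getLast?_eq_getElem?] using hy
    rw [← hx, ← hy2]
    exact hab

theorem verts_pair {a b : Ltr H} {c : ι} (hc : c ∈ verts H [a, b]) : c = a.1 ∨ c = b.1 := by
  obtain ⟨x, hx, rfl⟩ := hc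
  rcases List.mem_cons.1 hx with rfl | hx
  · exact Or.inl rfl
  · rw [List.mem_singleton] at hx
    rw [hx]
    exact Or.inr rfl

theorem mem_pair {a b : Ltr H} (ha : a.2 ≠ 1) (hb : b.2 ≠ 1) (hab : a.1 ≠ b.1)
    (hadj : G.Adj a.1 b.1) : Mem H G [a, b] := by
  refine ⟨isCycRed_pair ha hb hab, ?_⟩
  intro c hc d hd hcd
  rcases verts_pair hc with rfl | rfl <;> rcases verts_pair hd with rfl | rfl
  · exact absurd rfl hcd
  · exact hadj
  · exact hadj.symm
  · exact absurd rfl hcd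

/-- Two nontrivial elements of the same `H v` are sent into the same `H̃_w`. -/
theorem sing_map_vertex_eq (f : ↥(pgAut H G)) (v : ι) (h k : H v) (hne : h ≠ 1) (kne : k ≠ 1)
    {w w' : ι} {g : H w} {g' : H w'} {hg : g ≠ 1} {hg' : g' ≠ 1}
    (h1 : (f : Equiv.Perm (Carrier H G)) (sing G v h hne) = sing G w g hg)
    (h2 : (f : Equiv.Perm (Carrier H G)) (sing G v k kne) = sing G w' g' hg') : w = w' := by
  by_contra hww
  have hD := inD_pair_same (G := G) v h k hne kne
  have hD' := f.2.1.1 _ hD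
  have hmap : [sing G v h hne, sing G v k kne].map ⇑(f : Equiv.Perm (Carrier H G))
      = [sing G w g hg, sing G w' g' hg'] := by
    simp [h1, h2]
  rw [hmap] at hD'
  have hPi := f.2.1.2 _ hD
  rw [hmap] at hPi
  -- the left side has length 2
  have hflat : (([sing G w g hg, sing G w' g' hg'].map Subtype.val)).flatten
      = [(⟨w, g⟩ : Ltr H)] ++ [⟨w', g'⟩] := flatten_pair _ _
  have hred : red H ([(⟨w, g⟩ : Ltr H)] ++ [⟨w', g'⟩]) = [⟨w, g⟩, ⟨w', g'⟩] :=
    red_of_isRed (isCycRed_pair (a := ⟨w, g⟩) (b := ⟨w', g'⟩) hg hg' hww).1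
  have hadj : G.Adj w w' := by
    refine hD'.2.1 ?_ ?_ hww
    · exact ⟨[(⟨w, g⟩ : Ltr H)], by simp [sing_val], ⟨w, g⟩, List.mem_singleton_self _, rfl⟩
    · exact ⟨[(⟨w', g'⟩ : Ltr H)], by simp [sing_val], ⟨w', g'⟩, List.mem_singleton_self _, rfl⟩
  have hmem : Mem H G [(⟨w, g⟩ : Ltr H), ⟨w', g'⟩] :=
    mem_pair (a := ⟨w, g⟩) (b := ⟨w', g'⟩) hg hg' hww hadj
  have hlhs : pgPi H G [sing G w g hg, sing G w' g' hg'] = ⟨[⟨w, g⟩, ⟨w', g'⟩], hmem⟩ :=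
    pgPi_eq (by rw [flatten_pair]; exact hred) hmem
  have hrlen : ((pgPi H G [sing G v h hne, sing G v k kne]).val).length ≤ 1 :=
    pgPi_pair_same_len v h k hne kne
  have hfin := length_map_le_one f _ hrlen
  rw [← hPi, hlhs] at hfin
  simp at hfin

/-- Automorphisms send adjacent vertices to adjacent vertices. -/
theorem sing_map_adj (f : ↥(pgAut H G)) {v w : ι} (hadj : G.Adj v w)
    (h : H v) (k : H w) (hne : h ≠ 1) (kne : k ≠ 1)
    {w1 w2 : ι} {g1 : H w1} {g2 : H w2} {hg1 : g1 ≠ 1} {hg2 : g2 ≠ 1}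
    (h1 : (f : Equiv.Perm (Carrier H G)) (sing G v h hne) = sing G w1 g1 hg1)
    (h2 : (f : Equiv.Perm (Carrier H G)) (sing G w k kne) = sing G w2 g2 hg2) :
    G.Adj w1 w2 := by
  have hvw : v ≠ w := hadj.ne
  have hmemvw : Mem H G [(⟨v, h⟩ : Ltr H), ⟨w, k⟩] :=
    mem_pair (a := ⟨v, h⟩) (b := ⟨w, k⟩) hne kne hvw hadj
  have hredvw : red H ([(⟨v, h⟩ : Ltr H)] ++ [⟨w, k⟩]) = [(⟨v, h⟩ : Ltr H), ⟨w, k⟩] := by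
    have hr := red_of_isRed (isCycRed_pair (a := (⟨v, h⟩ : Ltr H)) (b := ⟨w, k⟩) hne kne hvw).1
    simpa using hr
  have hD : [sing G v h hne, sing G w k kne] ∈ pgD H G := by
    refine inD_pair _ _ ?_ ?_
    · intro c hc d hd hcd
      have hc' : c = v ∨ c = w := verts_pair (a := (⟨v, h⟩ : Ltr H)) (b := ⟨w, k⟩) hc
      have hd' : d = v ∨ d = w := verts_pair (a := (⟨v, h⟩ : Ltr H)) (b := ⟨w, k⟩) hd
      rcases hc' with rfl | rfl <;> rcases hd' with rfl | rfl
      · exact absurd rfl hcd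
      · exact hadj
      · exact hadj.symm
      · exact absurd rfl hcd
    · show IsCycRed H (red H ([(⟨v, h⟩ : Ltr H)] ++ [⟨w, k⟩]))
      rw [hredvw]
      exact isCycRed_pair hne kne hvw
  have hD' := f.2.1.1 _ hD
  have hmap : [sing G v h hne, sing G w k kne].map ⇑(f : Equiv.Perm (Carrier H G))
      = [sing G w1 g1 hg1, sing G w2 g2 hg2] := by
    simp [h1, h2]
  rw [hmap] at hD'
  have hPi := f.2.1.2 _ hD
  rw [hmap] at hPi
  have hlhs : pgPi H G [sing G v h hne, sing G w k kne] = ⟨[(⟨v, h⟩ : Ltr H), ⟨w, k⟩], hmemvw⟩ :=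
    pgPi_eq (by rw [flatten_pair]; exact hredvw) hmemvw
  -- the two image vertices are distinct
  have hww : w1 ≠ w2 := by
    intro hc
    subst hc
    have hlen := pgPi_pair_same_len (G := G) w1 g1 g2 hg1 hg2
    rw [hPi, hlhs] at hlen
    have h2l := two_le_length_map f ⟨[(⟨v, h⟩ : Ltr H), ⟨w, k⟩], hmemvw⟩ (by simp)
    omega
  refine hD'.2.1 ?_ ?_ hww
  · exact ⟨[(⟨w1, g1⟩ : Ltr H)], by simp [sing_val], ⟨w1, g1⟩, List.mem_singleton_self _, rfl⟩
  · exact ⟨[(⟨w2, g2⟩ : Ltr H)], by simp [sing_val], ⟨w2, g2⟩, List.mem_singleton_self _, rfl⟩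

/-- The vertex map induced by an automorphism. -/
noncomputable def sig (f : ↥(pgAut H G)) (v : ι) : ι :=
  Classical.choose (sing_map f v (eps H v) (eps_ne v))

theorem sig_spec (f : ↥(pgAut H G)) (v : ι) (h : H v) (hne : h ≠ 1) :
    ∃ (g : H (sig f v)) (hg : g ≠ 1),
      (f : Equiv.Perm (Carrier H G)) (sing G v h hne) = sing G (sig f v) g hg := by
  obtain ⟨g0, hg0, h0⟩ := Classical.choose_spec (sing_map f v (eps H v) (eps_ne v))
  obtain ⟨w, g, hgw, hfx⟩ := sing_map f v h hne
  have hw : w = sig f v := sing_map_vertex_eq f v h (eps H v) hne (eps_ne v) hfx h0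
  subst hw
  exact ⟨g, hgw, hfx⟩

theorem sig_mul (f g : ↥(pgAut H G)) (v : ι) : sig (f * g) v = sig f (sig g v) := by
  obtain ⟨g1, hg1, h1⟩ := sig_spec g v (eps H v) (eps_ne v)
  obtain ⟨g2, hg2, h2⟩ := sig_spec f (sig g v) g1 hg1
  obtain ⟨g3, hg3, h3⟩ := sig_spec (f * g) v (eps H v) (eps_ne v)
  have hc : ((f * g : ↥(pgAut H G)) : Equiv.Perm (Carrier H G)) (sing G v (eps H v) (eps_ne v))
      = (f : Equiv.Perm (Carrier H G)) ((g : Equiv.Perm (Carrier H G))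
          (sing G v (eps H v) (eps_ne v))) := by
    simp [Equiv.Perm.mul_apply]
  rw [hc, h1, h2] at h3
  exact (sing_inj_vertex h3).symm

theorem sig_inv_sig (f : ↥(pgAut H G)) (v : ι) : sig f⁻¹ (sig f v) = v := by
  obtain ⟨g1, hg1, h1⟩ := sig_spec f v (eps H v) (eps_ne v)
  obtain ⟨g2, hg2, h2⟩ := sig_spec f⁻¹ (sig f v) g1 hg1
  have hc : ((f⁻¹ : ↥(pgAut H G)) : Equiv.Perm (Carrier H G)) ((f : Equiv.Perm (Carrier H G))
      (sing G v (eps H v) (eps_ne v))) = sing G v (eps H v) (eps_ne v) := by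
    simp
  rw [h1, h2] at hc
  exact sing_inj_vertex hc

theorem sig_sig_inv (f : ↥(pgAut H G)) (v : ι) : sig f (sig f⁻¹ v) = v := by
  have h := sig_inv_sig f⁻¹ v
  rwa [inv_inv] at h

/-- The vertex permutation induced by an automorphism. -/
noncomputable def sigPerm (f : ↥(pgAut H G)) : Equiv.Perm ι where
  toFun := sig f
  invFun := sig f⁻¹
  left_inv := sig_inv_sig f
  right_inv := sig_sig_inv f

theorem sig_adj (f : ↥(pgAut H G)) {v w : ι} (h : G.Adj v w) : G.Adj (sig f v) (sig f w) := by
  obtain ⟨g1, hg1, h1⟩ := sig_spec f v (eps H v) (eps_ne v)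
  obtain ⟨g2, hg2, h2⟩ := sig_spec f w (eps H w) (eps_ne w)
  exact sing_map_adj f h (eps H v) (eps H w) (eps_ne v) (eps_ne w) h1 h2

theorem sigPerm_mem (f : ↥(pgAut H G)) : sigPerm f ∈ graphAut G := by
  refine ⟨fun a b h => sig_adj f h, fun a b h => ?_⟩
  exact sig_adj f⁻¹ h

/-- The homomorphism `Ψ`. -/
noncomputable def psi : ↥(pgAut H G) →* ↥(graphAut G) :=
  MonoidHom.mk' (fun f => ⟨sigPerm f, sigPerm_mem f⟩)
    (fun f g => Subtype.ext (Equiv.ext fun v => sig_mul f g v))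

theorem singleton_vertex_eq {a b : ι} {x : H a} {y : H b}
    (h : ([(⟨a, x⟩ : Ltr H)]) = [⟨b, y⟩]) : a = b := by
  have h2 := congrArg (fun l : List (Ltr H) => l.head?.map Sigma.fst) h
  simpa using h2

theorem singleton_letter_eq {a : ι} {x y : H a}
    (h : ([(⟨a, x⟩ : Ltr H)]) = [⟨a, y⟩]) : x = y := by
  have h1 : (⟨a, x⟩ : Ltr H) = ⟨a, y⟩ := by
    injection h
  simpa using h1

/-- The homomorphism `Φ`. -/
noncomputable def phi : (∀ i, MulAut (H i)) →* ↥(pgAut H G) :=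
  MonoidHom.mk' (fun fs => ⟨permMap fs, permMap_mem_pgAut fs⟩)
    (fun fs gs => by
      refine Subtype.ext (Equiv.ext fun x => ?_)
      show carMap (fs * gs) x = ((permMap fs * permMap gs : Equiv.Perm (Carrier H G))) x
      rw [Equiv.Perm.mul_apply]
      exact Subtype.ext (mapL_mapL fs gs x.val).symm)

theorem phi_apply_val (fs : ∀ i, MulAut (H i)) (x : Carrier H G) :
    (((phi fs : ↥(pgAut H G)) : Equiv.Perm (Carrier H G)) x).val
      = x.val.map fun p => ⟨p.1, fs p.1 p.2⟩ := rfl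

theorem phi_injective : Function.Injective (phi (H := H) (G := G)) := by
  intro fs gs h
  funext i
  refine MulEquiv.ext fun x => ?_
  by_cases hx : x = 1
  · rw [hx, map_one, map_one]
  · have h1 := congrArg (fun F : ↥(pgAut H G) =>
      (((F : Equiv.Perm (Carrier H G))) (sing G i x hx)).val) h
    simp only [phi_apply_val] at h1
    have h2 : ([(⟨i, fs i x⟩ : Ltr H)]) = [⟨i, gs i x⟩] := by
      simpa [sing, mapL] using h1
    exact singleton_letter_eq h2

theorem psi_covers (f : ↥(pgAut H G)) :
    CoversVia H G ⇑(f : Equiv.Perm (Carrier H G))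
      ⇑((psi f : ↥(graphAut G)) : Equiv.Perm ι) := by
  intro v h hne
  obtain ⟨g, hg, hfx⟩ := sig_spec f v h hne
  exact ⟨g, hg, congrArg Subtype.val hfx⟩

theorem psi_unique (f : ↥(pgAut H G)) (σ : Equiv.Perm ι) (hσ : σ ∈ graphAut G)
    (hcov : CoversVia H G ⇑(f : Equiv.Perm (Carrier H G)) ⇑σ) :
    σ = ((psi f : ↥(graphAut G)) : Equiv.Perm ι) := by
  refine Equiv.ext fun v => ?_
  obtain ⟨h', hne', hval⟩ := hcov v (eps H v) (eps_ne v)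
  obtain ⟨g, hg, hfx⟩ := sig_spec f v (eps H v) (eps_ne v)
  have hl : ([(⟨σ v, h'⟩ : Ltr H)]) = [⟨sig f v, g⟩] := by
    rw [← hval]
    exact congrArg Subtype.val hfx
  exact singleton_vertex_eq hl

theorem psi_phi (fs : ∀ i, MulAut (H i)) : psi (phi fs) = (1 : ↥(graphAut G)) := by
  refine Subtype.ext (Equiv.ext fun v => ?_)
  obtain ⟨g, hg, hfx⟩ := sig_spec (phi fs) v (eps H v) (eps_ne v)
  have hval := congrArg Subtype.val hfx
  rw [phi_apply_val] at hval
  have hl : ([(⟨v, fs v (eps H v)⟩ : Ltr H)]) = [⟨sig (phi fs) v, g⟩] := by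
    simpa [sing] using hval
  exact (singleton_vertex_eq hl).symm

/-! #### Splitting a long cyclically reduced word -/

theorem head?_take' {α : Type*} {l : List α} {k : ℕ} (hk : 0 < k) :
    (l.take k).head? = l[0]? := by
  rw [List.head?_eq_getElem?, List.getElem?_take, if_pos hk]

theorem getLast?_take' {α : Type*} {l : List α} {k : ℕ} (hk1 : 1 ≤ k) (hk2 : k ≤ l.length) :
    (l.take k).getLast? = l[k - 1]? := by
  rw [List.getLast?_eq_getElem?, List.length_take, min_eq_left hk2, List.getElem?_take,
    if_pos (by omega)]

theorem head?_drop' {α : Type*} {l : List α} {k : ℕ} : (l.drop k).head? = l[k]? := by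
  rw [List.head?_eq_getElem?, List.getElem?_drop]
  norm_num

theorem getLast?_drop' {α : Type*} {l : List α} {k : ℕ} (hk : k < l.length) :
    (l.drop k).getLast? = l[l.length - 1]? := by
  rw [List.getLast?_eq_getElem?, List.length_drop, List.getElem?_drop]
  congr 1
  omega

theorem isCycRed_of {l : List (Ltr H)} (hr : IsRed H l)
    (h : 2 ≤ l.length → (l[0]?).map Sigma.fst ≠ (l[l.length - 1]?).map Sigma.fst) :
    IsCycRed H l := by
  refine ⟨hr, ?_⟩
  intro a ha b hb h2
  intro hc
  apply h h2
  rw [List.head?_eq_getElem?] at ha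
  rw [List.getLast?_eq_getElem?] at hb
  rw [Option.mem_def] at ha hb
  rw [ha, hb]
  simp [hc]

theorem exists_split {l : List (Ltr H)} (hl : IsCycRed H l) (h2 : 2 ≤ l.length) :
    ∃ y z, l = y ++ z ∧ y ≠ [] ∧ z ≠ [] ∧ IsCycRed H y ∧ IsCycRed H z := by
  set r := l.length with hr
  have hcons : ∀ i, i + 1 < r → (l[i]?).map Sigma.fst ≠ (l[i + 1]?).map Sigma.fst := by
    intro i hi
    have hchain := List.isChain_iff_getElem.1 hl.1.2 i (by omega)
    rw [List.getElem?_eq_getElem (show i < l.length by omega),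
      List.getElem?_eq_getElem (show i + 1 < l.length by omega)]
    simp only [Option.map_some, ne_eq, Option.some.injEq]
    intro hc
    apply hchain
    simpa [List.get_eq_getElem] using hc
  have main : ∀ k, 1 ≤ k → k ≤ r - 1 →
      (2 ≤ k → (l[0]?).map Sigma.fst ≠ (l[k - 1]?).map Sigma.fst) →
      (k ≤ r - 2 → (l[k]?).map Sigma.fst ≠ (l[r - 1]?).map Sigma.fst) →
      ∃ y z, l = y ++ z ∧ y ≠ [] ∧ z ≠ [] ∧ IsCycRed H y ∧ IsCycRed H z := by
    intro k hk1 hk2 hy hz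
    have hkr : k < r := by omega
    have hsplit := (List.take_append_drop k l).symm
    obtain ⟨hry, hrz⟩ := isRed_of_append (l := l.take k) (m := l.drop k)
      (by rw [List.take_append_drop]; exact hl.1)
    have hylen : (l.take k).length = k := by
      rw [List.length_take]
      omega
    have hzlen : (l.drop k).length = r - k := by
      rw [List.length_drop]
    refine ⟨l.take k, l.drop k, hsplit, ?_, ?_, ?_, ?_⟩
    · intro hc
      rw [hc] at hylen
      simp at hylen
      omega
    · intro hc
      rw [hc] at hzlen
      simp at hzlen
      omega
    · refine isCycRed_of hry ?_
      intro h2y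
      rw [hylen] at h2y ⊢
      rw [show (l.take k)[0]? = l[0]? by rw [List.getElem?_take, if_pos (by omega)],
        show (l.take k)[k - 1]? = l[k - 1]? by rw [List.getElem?_take, if_pos (by omega)]]
      exact hy h2y
    · refine isCycRed_of hrz ?_
      intro h2z
      rw [hzlen] at h2z ⊢
      rw [show (l.drop k)[0]? = l[k]? by simp [List.getElem?_drop],
        show (l.drop k)[r - k - 1]? = l[r - 1]? by rw [List.getElem?_drop]; congr 1; omega]
      exact hz (by omega)
  by_cases hc1 : r ≤ 2 ∨ (l[1]?).map Sigma.fst ≠ (l[r - 1]?).map Sigma.fst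
  case pos =>
    -- use k = 1
    refine main 1 (by omega) (by omega) (by omega) ?_
    intro h1r
    rcases hc1 with hc1 | hc1
    · omega
    · exact hc1
  case neg =>
    push_neg at hc1
    obtain ⟨hr3', hc1⟩ := hc1
    have hr3 : 3 ≤ r := by omega
    by_cases hc2 : (l[0]?).map Sigma.fst = (l[r - 2]?).map Sigma.fst
    · -- use k = r - 2
      refine main (r - 2) ?_ (by omega) ?_ ?_
      · -- 1 ≤ r - 2, i.e. r ≥ 3
        omega
      · intro h2y hc
        -- l[0] = l[r-3] together with l[0] = l[r-2] contradicts the chain at r - 3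
        apply hcons (r - 3) (by omega)
        rw [show r - 3 + 1 = r - 2 by omega]
        rw [show (r - 2) - 1 = r - 3 by omega] at hc
        rw [← hc]
        exact hc2
      · intro _
        have hcc := hcons (r - 2) (by omega)
        rwa [show r - 2 + 1 = r - 1 by omega] at hcc
    · -- use k = r - 1
      refine main (r - 1) (by omega) (by omega) ?_ ?_
      · intro _
        rw [show r - 1 - 1 = r - 2 by omega]
        exact hc2
      · intro hcon
        omega

/-! #### Extracting automorphisms from an element of the kernel -/

theorem listProd_sing_pair (v : ι) (h k : H v) (hne : h ≠ 1) (kne : k ≠ 1) :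
    listProd H ((sing G v h hne).val ++ (sing G v k kne).val) = CoprodI.of (h * k) := by
  rw [listProd_append, show (sing G v h hne).val = [(⟨v, h⟩ : Ltr H)] from rfl,
    show (sing G v k kne).val = [(⟨v, k⟩ : Ltr H)] from rfl,
    listProd_single, listProd_single, map_mul]

theorem pgPi_pair_same_one (v : ι) (h k : H v) (hne : h ≠ 1) (kne : k ≠ 1)
    (hk : h * k = 1) : pgPi H G [sing G v h hne, sing G v k kne] = one H G :=
  pgPi_eq (by
    rw [flatten_pair]
    exact red_eq_nil_of_listProd (by rw [listProd_sing_pair v h k hne kne, hk, map_one]))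
    (mem_nil H G)

theorem pgPi_pair_same_eq (v : ι) (h k : H v) (hne : h ≠ 1) (kne : k ≠ 1)
    (hk : h * k ≠ 1) :
    pgPi H G [sing G v h hne, sing G v k kne] = sing G v (h * k) hk :=
  pgPi_eq (by
    rw [flatten_pair]
    exact red_eq_single_of_listProd hk (listProd_sing_pair v h k hne kne))
    (mem_single H G v (h * k) hk)

theorem sig_spec_id (f : ↥(pgAut H G)) (hid : ∀ v, sig f v = v) (v : ι) (h : H v)
    (hne : h ≠ 1) : ∃ (g : H v) (hg : g ≠ 1),
      (f : Equiv.Perm (Carrier H G)) (sing G v h hne) = sing G v g hg := by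
  obtain ⟨g, hg, hfx⟩ := sig_spec f v h hne
  have h' : ∃ (g : H (sig f v)) (hg : g ≠ 1),
      (f : Equiv.Perm (Carrier H G)) (sing G v h hne) = sing G (sig f v) g hg := ⟨g, hg, hfx⟩
  rw [hid v] at h'
  exact h'

/-- The automorphism of `H v` extracted from an element of the kernel of `Ψ`. -/
noncomputable def extr (f : ↥(pgAut H G)) (hid : ∀ v, sig f v = v) (v : ι) (h : H v) : H v :=
  if hne : h = 1 then 1 else Classical.choose (sig_spec_id f hid v h hne)

theorem extr_one (f : ↥(pgAut H G)) (hid : ∀ v, sig f v = v) (v : ι) :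
    extr f hid v 1 = 1 := by
  unfold extr
  rw [dif_pos rfl]

theorem extr_ne (f : ↥(pgAut H G)) (hid : ∀ v, sig f v = v) (v : ι) (h : H v)
    (hne : h ≠ 1) : extr f hid v h ≠ 1 := by
  unfold extr
  rw [dif_neg hne]
  obtain ⟨hg, -⟩ := Classical.choose_spec (sig_spec_id f hid v h hne)
  exact hg

theorem extr_val (f : ↥(pgAut H G)) (hid : ∀ v, sig f v = v) (v : ι) (h : H v)
    (hne : h ≠ 1) : ((f : Equiv.Perm (Carrier H G)) (sing G v h hne)).val
      = [⟨v, extr f hid v h⟩] := by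
  have hrw : extr f hid v h = Classical.choose (sig_spec_id f hid v h hne) := by
    unfold extr
    rw [dif_neg hne]
  rw [hrw]
  obtain ⟨hg, hfx⟩ := Classical.choose_spec (sig_spec_id f hid v h hne)
  exact congrArg Subtype.val hfx

theorem extr_sing (f : ↥(pgAut H G)) (hid : ∀ v, sig f v = v) (v : ι) (h : H v)
    (hne : h ≠ 1) : (f : Equiv.Perm (Carrier H G)) (sing G v h hne)
      = sing G v (extr f hid v h) (extr_ne f hid v h hne) :=
  Subtype.ext (extr_val f hid v h hne)

theorem extr_mul (f : ↥(pgAut H G)) (hid : ∀ v, sig f v = v) (v : ι) (h k : H v) :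
    extr f hid v (h * k) = extr f hid v h * extr f hid v k := by
  by_cases hne : h = 1
  · subst hne
    rw [one_mul, extr_one, one_mul]
  by_cases kne : k = 1
  · subst kne
    rw [mul_one, extr_one, mul_one]
  have hD := inD_pair_same (G := G) v h k hne kne
  have hPi := f.2.1.2 _ hD
  have hmap : [sing G v h hne, sing G v k kne].map ⇑(f : Equiv.Perm (Carrier H G))
      = [sing G v (extr f hid v h) (extr_ne f hid v h hne),
         sing G v (extr f hid v k) (extr_ne f hid v k kne)] := by
    simp [extr_sing f hid v h hne, extr_sing f hid v k kne]
  rw [hmap] at hPi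
  by_cases hk : h * k = 1
  · -- both sides are `1`
    rw [pgPi_pair_same_one v h k hne kne hk, aut_one] at hPi
    have hek : extr f hid v h * extr f hid v k = 1 := by
      by_contra hek
      rw [pgPi_pair_same_eq v _ _ _ _ hek] at hPi
      have := congrArg Subtype.val hPi
      simp [sing, one] at this
    rw [hk, extr_one, hek]
  · rw [pgPi_pair_same_eq v h k hne kne hk, extr_sing f hid v (h * k) hk] at hPi
    have hek : extr f hid v h * extr f hid v k ≠ 1 := by
      intro hek
      rw [pgPi_pair_same_one v _ _ _ _ hek] at hPi
      have := congrArg Subtype.val hPi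
      simp [sing, one] at this
    rw [pgPi_pair_same_eq v _ _ _ _ hek] at hPi
    have := congrArg Subtype.val hPi
    exact (singleton_letter_eq this).symm

theorem extr_inverse (f g : ↥(pgAut H G)) (hidf : ∀ v, sig f v = v)
    (hidg : ∀ v, sig g v = v)
    (hfg : ∀ x, (g : Equiv.Perm (Carrier H G)) ((f : Equiv.Perm (Carrier H G)) x) = x)
    (v : ι) (h : H v) : extr g hidg v (extr f hidf v h) = h := by
  by_cases hne : h = 1
  · subst hne
    rw [extr_one, extr_one]
  have h1 := extr_sing f hidf v h hne
  have h2 := extr_sing g hidg v (extr f hidf v h) (extr_ne f hidf v h hne)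
  rw [← h1, hfg] at h2
  have hval := congrArg Subtype.val h2
  have h3 : h = extr g hidg v (extr f hidf v h) :=
    singleton_letter_eq (by simpa [sing] using hval)
  exact h3.symm

/-- The family of automorphisms extracted from an element of the kernel of `Ψ`. -/
noncomputable def extrAut (f : ↥(pgAut H G)) (hid : ∀ v, sig f v = v)
    (hid' : ∀ v, sig f⁻¹ v = v) (v : ι) : MulAut (H v) where
  toFun := extr f hid v
  invFun := extr f⁻¹ hid' v
  left_inv h := extr_inverse f f⁻¹ hid hid' (by intro x; simp) v h
  right_inv h := extr_inverse f⁻¹ f hid' hid (by intro x; simp) v h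
  map_mul' := extr_mul f hid v

/-! #### The key induction: an automorphism agreeing with a letterwise map on letters is
letterwise -/

theorem verts_append_left {y z : List (Ltr H)} {a : ι} (ha : a ∈ verts H y) :
    a ∈ verts H (y ++ z) := by
  obtain ⟨b, hb, rfl⟩ := ha
  exact ⟨b, List.mem_append_left _ hb, rfl⟩

theorem verts_append_right {y z : List (Ltr H)} {a : ι} (ha : a ∈ verts H z) :
    a ∈ verts H (y ++ z) := by
  obtain ⟨b, hb, rfl⟩ := ha
  exact ⟨b, List.mem_append_right _ hb, rfl⟩

theorem map_eq_mapL (f : ↥(pgAut H G)) (fs : ∀ i, MulAut (H i))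
    (hbase : ∀ (v : ι) (h : H v) (hne : h ≠ 1),
      ((f : Equiv.Perm (Carrier H G)) (sing G v h hne)).val = [⟨v, fs v h⟩]) :
    ∀ x : Carrier H G, ((f : Equiv.Perm (Carrier H G)) x).val = mapL fs x.val := by
  suffices hall : ∀ (n : ℕ) (x : Carrier H G), x.val.length = n →
      ((f : Equiv.Perm (Carrier H G)) x).val = mapL fs x.val by
    exact fun x => hall _ x rfl
  intro n
  induction n using Nat.strong_induction_on with
  | _ n ih =>
  intro x hn
  rcases Nat.lt_or_ge n 2 with hlt | hge
  · -- short words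
    rcases hv : x.val with _ | ⟨a, rest⟩
    · have hx1 : x = one H G := Subtype.ext hv
      rw [hx1, aut_one]
      rfl
    · rcases hrest : rest with _ | ⟨b, t⟩
      · subst hrest
        have hg : a.2 ≠ 1 := x.2.1.1.1 a (by rw [hv]; exact List.mem_singleton_self a)
        have hx1 : x = sing G a.1 a.2 hg :=
          Subtype.ext (by rw [hv]; exact (congrArg (fun z => [z]) (Sigma.eta a)).symm)
        rw [hx1, hbase a.1 a.2 hg]
        rfl
      · subst hrest
        rw [hv] at hn
        simp at hn
        omega
  · -- long words: split
    have h2 : 2 ≤ x.val.length := by omega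
    obtain ⟨y, z, hyz, hy0, hz0, hcy, hcz⟩ := exists_split x.2.1 h2
    have hcx : G.IsClique (verts H (y ++ z)) := hyz ▸ x.2.2
    have hYmem : Mem H G y :=
      ⟨hcy, fun a ha b hb hab => hcx (verts_append_left ha) (verts_append_left hb) hab⟩
    have hZmem : Mem H G z :=
      ⟨hcz, fun a ha b hb hab => hcx (verts_append_right ha) (verts_append_right hb) hab⟩
    set Y : Carrier H G := ⟨y, hYmem⟩ with hY
    set Z : Carrier H G := ⟨z, hZmem⟩ with hZ
    have hyzval : Y.val ++ Z.val = x.val := hyz.symm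
    have hredx : red H (Y.val ++ Z.val) = x.val := by
      rw [hyzval]
      exact red_of_isRed x.2.1.1
    have hD : [Y, Z] ∈ pgD H G := by
      refine inD_pair Y Z ?_ ?_
      · exact hcx
      · rw [hredx]
        exact x.2.1
    have hPix : pgPi H G [Y, Z] = x := pgPi_eq (l := x.val)
      (by rw [flatten_pair]; exact hredx) x.2
    have hPi := f.2.1.2 _ hD
    rw [hPix] at hPi
    have hmap2 : [Y, Z].map ⇑(f : Equiv.Perm (Carrier H G))
        = [(f : Equiv.Perm (Carrier H G)) Y, (f : Equiv.Perm (Carrier H G)) Z] := rfl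
    rw [hmap2] at hPi
    -- lengths of the pieces
    have hlen : y.length + z.length = n := by
      rw [← hn, hyz, List.length_append]
    have hylen : 0 < y.length := List.length_pos_iff.2 hy0
    have hzlen : 0 < z.length := List.length_pos_iff.2 hz0
    have hfy : ((f : Equiv.Perm (Carrier H G)) Y).val = mapL fs y :=
      ih y.length (by omega) Y rfl
    have hfz : ((f : Equiv.Perm (Carrier H G)) Z).val = mapL fs z :=
      ih z.length (by omega) Z rfl
    have hredm : red H (((f : Equiv.Perm (Carrier H G)) Y).val
        ++ ((f : Equiv.Perm (Carrier H G)) Z).val) = mapL fs x.val := by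
      rw [hfy, hfz, ← mapL_append, red_mapL, show y ++ z = x.val from hyz.symm,
        red_of_isRed x.2.1.1]
    have hPi2 : pgPi H G [(f : Equiv.Perm (Carrier H G)) Y,
        (f : Equiv.Perm (Carrier H G)) Z] = ⟨mapL fs x.val, mem_mapL fs x.2⟩ :=
      pgPi_eq (by rw [flatten_pair]; exact hredm) (mem_mapL fs x.2)
    rw [hPi2] at hPi
    exact (congrArg Subtype.val hPi).symm

end Lemmas2

/-- For a family of nontrivial finite groups there is an exact sequence
`1 → ∏ᵥ Aut(Hᵥ) → Aut_Part(M(G,H)) → Aut_Graphs(G)`: (i) the letterwise action gives an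
injective group homomorphism `Φ`; (ii) every automorphism of `M(G,H)` covers a unique graph
automorphism, giving a group homomorphism `Ψ`; (iii) `ker Ψ = im Φ`. -/
theorem statement3 {ι : Type*} (H : ι → Type*) [∀ i, Group (H i)]
    [DecidableEq ι] [∀ i, DecidableEq (H i)] (G : SimpleGraph ι)
    [∀ i, Nontrivial (H i)] [∀ i, Finite (H i)] :
    ∃ (Φ : (∀ i, MulAut (H i)) →* ↥(pgAut H G)) (Ψ : ↥(pgAut H G) →* ↥(graphAut G)),
      -- Φ is the letterwise action of `∏ᵥ Aut(Hᵥ)`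
      (∀ (fs : ∀ i, MulAut (H i)) (x : Carrier H G),
        (((Φ fs : Equiv.Perm (Carrier H G))) x).val
          = x.val.map fun p => ⟨p.1, fs p.1 p.2⟩) ∧
      -- (i) Φ is injective
      Function.Injective Φ ∧
      -- (ii) every automorphism covers the graph automorphism `Ψ f` ...
      (∀ f : ↥(pgAut H G),
        CoversVia H G ((f : Equiv.Perm (Carrier H G)) : Carrier H G → Carrier H G)
          ((Ψ f : Equiv.Perm ι) : ι → ι)) ∧
      -- ... and this graph automorphism is unique
      (∀ (f : ↥(pgAut H G)) (σ : Equiv.Perm ι), σ ∈ graphAut G →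
        CoversVia H G ((f : Equiv.Perm (Carrier H G)) : Carrier H G → Carrier H G)
          (σ : ι → ι) →
        σ = (Ψ f : Equiv.Perm ι)) ∧
      -- (iii) exactness: `ker Ψ = im Φ`
      Ψ.ker = Φ.range := by
  classical
  refine ⟨phi, psi, fun fs x => rfl, phi_injective, psi_covers, psi_unique, ?_⟩
  ext f
  simp only [MonoidHom.mem_ker, MonoidHom.mem_range]
  constructor
  · intro hf
    have hid : ∀ v, sig f v = v := by
      intro v
      have hcon := congrArg (fun F : ↥(graphAut G) => ((F : Equiv.Perm ι)) v) hf
      exact hcon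
    have hfinv : psi f⁻¹ = (1 : ↥(graphAut G)) := by rw [map_inv, hf, inv_one]
    have hid' : ∀ v, sig f⁻¹ v = v := by
      intro v
      have hcon := congrArg (fun F : ↥(graphAut G) => ((F : Equiv.Perm ι)) v) hfinv
      exact hcon
    refine ⟨fun v => extrAut f hid hid' v, ?_⟩
    refine Subtype.ext (Equiv.ext fun x => Subtype.ext ?_)
    exact (map_eq_mapL f _ (fun v h hne => extr_val f hid v h hne) x).symm
  · rintro ⟨fs, rfl⟩
    exact psi_phi fs

end PaperPG
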